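/- arXiv:2505.15189 — 3 statements merged into one kernel-verified Lean document; each statement's English description precedes it below -/
import Mathlib

section
/- Let n ≥ 3, let Ω ⊆ ℝⁿ be a nonempty open connected set, and let B : Ω → Matₙ(ℝ) be a smooth matrix-valued map such that B(x) is invertible for every x ∈ Ω. Suppose that for every harmonic function ψ : ℝⁿ → ℝ, the vector field F_ψ : Ω → ℝⁿ given by F_ψ(x) = B(x)·∇ψ(x) is closed on Ω. Then there exists a constant C ≠ 0 such that B(x) = C·I for every x ∈ Ω. -/
/-- A function with zero Fréchet derivative on an open preconnected set is constant there. -/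
private lemma stmt4_aux_const {E : Type*} [NormedAddCommGroup E] [NormedSpace ℝ E]
    {f : E → ℝ} {Ω : Set E} (hΩo : IsOpen Ω) (hΩc : IsPreconnected Ω)
    (hdiff : ∀ x ∈ Ω, DifferentiableAt ℝ f x)
    (hzero : ∀ x ∈ Ω, fderiv ℝ f x = 0) :
    ∀ x ∈ Ω, ∀ y ∈ Ω, f x = f y := by
  have hloc : ∀ z ∈ Ω, ∃ ε > 0, Metric.ball z ε ⊆ Ω ∧ ∀ y ∈ Metric.ball z ε, f y = f z := by
    intro z hz
    obtain ⟨ε, hε, hball⟩ := Metric.isOpen_iff.mp hΩo z hz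
    refine ⟨ε, hε, hball, fun y hy => ?_⟩
    refine (convex_ball z ε).is_const_of_fderivWithin_eq_zero
      (fun w hw => (hdiff w (hball hw)).differentiableWithinAt) (fun w hw => ?_) hy
      (Metric.mem_ball_self hε)
    rw [fderivWithin_of_isOpen Metric.isOpen_ball hw]
    exact hzero w (hball hw)
  intro x hx y hy
  by_contra hne
  set u : Set E := {z | z ∈ Ω ∧ f z = f x} with hu
  set v : Set E := {z | z ∈ Ω ∧ f z ≠ f x} with hv
  have hou : IsOpen u := by
    rw [Metric.isOpen_iff]
    rintro z ⟨hz, hfz⟩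
    obtain ⟨ε, hε, hball, hconst⟩ := hloc z hz
    exact ⟨ε, hε, fun w hw => ⟨hball hw, (hconst w hw).trans hfz⟩⟩
  have hov : IsOpen v := by
    rw [Metric.isOpen_iff]
    rintro z ⟨hz, hfz⟩
    obtain ⟨ε, hε, hball, hconst⟩ := hloc z hz
    exact ⟨ε, hε, fun w hw => ⟨hball hw, (hconst w hw).trans_ne hfz⟩⟩
  obtain ⟨z, _, ⟨_, h1⟩, ⟨_, h2⟩⟩ := hΩc u v hou hov
    (fun z hz => by by_cases h : f z = f x <;> [exact Or.inl ⟨hz, h⟩; exact Or.inr ⟨hz, h⟩])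
    ⟨x, hx, hx, rfl⟩ ⟨y, hy, hy, fun h => hne h.symm⟩
  exact h2 h1

/-- Euclidean form of Lemma 2.2: a smooth invertible-matrix-valued map `B`
on a nonempty open connected set `Ω ⊆ ℝⁿ` (`n ≥ 3`) such that `x ↦ B(x)·∇ψ(x)` is a
closed vector field on `Ω` for every harmonic `ψ`, must be a nonzero constant multiple
of the identity. -/
theorem stmt_4 (n : ℕ) (hn : 3 ≤ n) (Ω : Set (Fin n → ℝ))
    (hΩne : Ω.Nonempty) (hΩo : IsOpen Ω) (hΩc : IsConnected Ω)
    (B : (Fin n → ℝ) → Fin n → Fin n → ℝ)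
    (hBsmooth : ContDiffOn ℝ (⊤ : ℕ∞) B Ω)
    (hBinv : ∀ x ∈ Ω, IsUnit (Matrix.of (B x)))
    (hclosed : ∀ ψ : (Fin n → ℝ) → ℝ, ContDiff ℝ (⊤ : ℕ∞) ψ →
      (∀ y, ∑ j, fderiv ℝ (fun z => fderiv ℝ ψ z (Pi.single j 1)) y (Pi.single j 1) = 0) →
      ∀ x ∈ Ω, ∀ j k : Fin n,
        fderiv ℝ (fun y => ∑ i, B y k i * fderiv ℝ ψ y (Pi.single i 1)) x (Pi.single j 1) =
        fderiv ℝ (fun y => ∑ i, B y j i * fderiv ℝ ψ y (Pi.single i 1)) x (Pi.single k 1)) :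
    ∃ C : ℝ, C ≠ 0 ∧ ∀ x ∈ Ω, Matrix.of (B x) = C • (1 : Matrix (Fin n) (Fin n) ℝ) := by
  classical
  obtain ⟨x₀, hx₀⟩ := hΩne
  have npos : 0 < n := by omega
  have i0 : Fin n := ⟨0, npos⟩
  haveI : Nonempty (Fin n) := ⟨i0⟩
  -- there is always a third index
  have hthird : ∀ a b : Fin n, ∃ c : Fin n, c ≠ a ∧ c ≠ b := by
    intro a b
    by_contra hc
    push_neg at hc
    have hsub : (Finset.univ : Finset (Fin n)) ⊆ {a, b} := by
      intro c _
      rcases eq_or_ne c a with h | h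
      · simp [h]
      · simp [hc c h]
    have h2 := Finset.card_le_card hsub
    have h3 : ({a, b} : Finset (Fin n)).card ≤ 2 :=
      (Finset.card_insert_le _ _).trans (by simp)
    have h4 := h2.trans h3
    rw [Finset.card_univ, Fintype.card_fin] at h4
    omega
  have hsingle : ∀ j p : Fin n, (Pi.single j (1:ℝ) : Fin n → ℝ) p = if p = j then 1 else 0 := by
    intro j p; simp [Pi.single_apply]
  -- entries of B are differentiable on Ω
  have hBdiff : ∀ x ∈ Ω, ∀ k i : Fin n, DifferentiableAt ℝ (fun y => B y k i) x := by
    intro x hx k i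
    have h1 : DifferentiableAt ℝ B x :=
      (hBsmooth.contDiffAt (hΩo.mem_nhds hx)).differentiableAt (by simp)
    exact differentiableAt_pi.mp (differentiableAt_pi.mp h1 k) i
  -- test with linear harmonic functions
  have hlin : ∀ x ∈ Ω, ∀ j k p : Fin n,
      fderiv ℝ (fun y => B y k p) x (Pi.single j 1) =
      fderiv ℝ (fun y => B y j p) x (Pi.single k 1) := by
    intro x hx j k p
    have hψ : ∀ z : Fin n → ℝ, fderiv ℝ (fun w : Fin n → ℝ => w p) z
        = (ContinuousLinearMap.proj p : (Fin n → ℝ) →L[ℝ] ℝ) :=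
      fun z => (ContinuousLinearMap.proj p : (Fin n → ℝ) →L[ℝ] ℝ).hasFDerivAt.fderiv
    have hfun : ∀ k : Fin n,
        (fun y => ∑ i, B y k i * fderiv ℝ (fun w : Fin n → ℝ => w p) y (Pi.single i 1))
          = fun y => B y k p := by
      intro k; funext y
      have h1 : ∀ i : Fin n, fderiv ℝ (fun w : Fin n → ℝ => w p) y (Pi.single i 1)
          = if p = i then 1 else 0 := by
        intro i; rw [hψ y]; exact hsingle i p
      simp [h1, mul_ite]
    have hharm : ∀ y, ∑ j, fderiv ℝ
        (fun z => fderiv ℝ (fun w : Fin n → ℝ => w p) z (Pi.single j 1)) y (Pi.single j 1) = 0 := by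
      intro y
      have h2 : ∀ j : Fin n, (fun z : Fin n → ℝ =>
          fderiv ℝ (fun w : Fin n → ℝ => w p) z (Pi.single j 1))
          = fun _ => (ContinuousLinearMap.proj p : (Fin n → ℝ) →L[ℝ] ℝ) (Pi.single j 1) := by
        intro j; funext z; rw [hψ z]
      simp [h2]
    have key := hclosed (fun w => w p)
      ((ContinuousLinearMap.proj p : (Fin n → ℝ) →L[ℝ] ℝ).contDiff) hharm x hx j k
    rwa [hfun k, hfun j] at key
  -- test with quadratic harmonic functions x_p x_q, p ≠ q
  have hquad : ∀ x ∈ Ω, ∀ p q : Fin n, p ≠ q → ∀ j k : Fin n,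
      B x k p * (if q = j then 1 else 0) + B x k q * (if p = j then 1 else 0)
      = B x j p * (if q = k then 1 else 0) + B x j q * (if p = k then 1 else 0) := by
    intro x hx p q hpq j k
    have P : (Fin n → ℝ) →L[ℝ] ℝ := ContinuousLinearMap.proj p
    set P := (ContinuousLinearMap.proj p : (Fin n → ℝ) →L[ℝ] ℝ) with hP
    set Q := (ContinuousLinearMap.proj q : (Fin n → ℝ) →L[ℝ] ℝ) with hQ
    have hPapp : ∀ j : Fin n, P (Pi.single j (1:ℝ)) = if p = j then 1 else 0 :=
      fun j => hsingle j p
    have hQapp : ∀ j : Fin n, Q (Pi.single j (1:ℝ)) = if q = j then 1 else 0 :=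
      fun j => hsingle j q
    have hψd : ∀ z : Fin n → ℝ,
        HasFDerivAt (fun w : Fin n → ℝ => w p * w q) (z p • Q + z q • P) z :=
      fun z => P.hasFDerivAt.mul Q.hasFDerivAt
    have hψ : ∀ z, fderiv ℝ (fun w : Fin n → ℝ => w p * w q) z = z p • Q + z q • P :=
      fun z => (hψd z).fderiv
    have hharm : ∀ y, ∑ j, fderiv ℝ
        (fun z => fderiv ℝ (fun w : Fin n → ℝ => w p * w q) z (Pi.single j 1)) y
        (Pi.single j 1) = 0 := by
      intro y
      have h2 : ∀ j : Fin n, (fun z : Fin n → ℝ =>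
          fderiv ℝ (fun w : Fin n → ℝ => w p * w q) z (Pi.single j 1))
          = fun z => z p * (Pi.single j 1 : Fin n → ℝ) q
              + z q * (Pi.single j 1 : Fin n → ℝ) p := by
        intro j; funext z; rw [hψ z]
        simp [hP, hQ, mul_comm]
      have h3 : ∀ j : Fin n, fderiv ℝ (fun z : Fin n → ℝ =>
          z p * (Pi.single j 1 : Fin n → ℝ) q + z q * (Pi.single j 1 : Fin n → ℝ) p) y
          (Pi.single j 1)
          = (Pi.single j 1 : Fin n → ℝ) q * (Pi.single j 1 : Fin n → ℝ) p
            + (Pi.single j 1 : Fin n → ℝ) p * (Pi.single j 1 : Fin n → ℝ) q := by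
        intro j
        have hd : HasFDerivAt (fun z : Fin n → ℝ =>
            z p * (Pi.single j 1 : Fin n → ℝ) q + z q * (Pi.single j 1 : Fin n → ℝ) p)
            (((Pi.single j 1 : Fin n → ℝ) q) • P + ((Pi.single j 1 : Fin n → ℝ) p) • Q) y :=
          (P.hasFDerivAt.mul_const _).add (Q.hasFDerivAt.mul_const _)
        rw [hd.fderiv]
        simp only [ContinuousLinearMap.add_apply, ContinuousLinearMap.smul_apply,
          smul_eq_mul, hPapp, hQapp, hsingle]
        try ring
      simp only [h2, h3]
      refine Finset.sum_eq_zero fun j _ => ?_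
      rw [hsingle j q, hsingle j p]
      rcases eq_or_ne q j with h | h
      · have hpj : p ≠ j := fun hp => hpq (hp.trans h.symm)
        simp [h, hpj]
      · simp [h]
    have hfun : ∀ k : Fin n,
        (fun y => ∑ i, B y k i * fderiv ℝ (fun w : Fin n → ℝ => w p * w q) y (Pi.single i 1))
        = fun y => B y k p * y q + B y k q * y p := by
      intro k; funext y
      have h1 : ∀ i : Fin n, fderiv ℝ (fun w : Fin n → ℝ => w p * w q) y (Pi.single i 1)
          = y p * (if q = i then 1 else 0) + y q * (if p = i then 1 else 0) := by
        intro i; rw [hψ y]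
        simp [hP, hQ, hsingle]
      simp only [h1, mul_add, Finset.sum_add_distrib, mul_ite, mul_one, mul_zero,
        Finset.sum_ite_eq, Finset.mem_univ, if_true]
      ring
    have hBk : ∀ k i : Fin n, HasFDerivAt (fun y => B y k i)
        (fderiv ℝ (fun y => B y k i) x) x := fun k i => (hBdiff x hx k i).hasFDerivAt
    have hFd : ∀ k : Fin n, fderiv ℝ (fun y => B y k p * y q + B y k q * y p) x
        = ((B x k p • Q + x q • fderiv ℝ (fun y => B y k p) x)
          + (B x k q • P + x p • fderiv ℝ (fun y => B y k q) x)) :=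
      fun k => (((hBk k p).mul Q.hasFDerivAt).add ((hBk k q).mul P.hasFDerivAt)).fderiv
    have key := hclosed (fun w => w p * w q) (P.contDiff.mul Q.contDiff) hharm x hx j k
    rw [hfun k, hfun j, hFd k, hFd j] at key
    simp only [ContinuousLinearMap.add_apply, ContinuousLinearMap.smul_apply,
      smul_eq_mul, hPapp, hQapp] at key
    rw [hlin x hx j k p, hlin x hx j k q] at key
    linarith [key]
  -- off-diagonal entries vanish
  have hoff : ∀ x ∈ Ω, ∀ k i : Fin n, k ≠ i → B x k i = 0 := by
    intro x hx k i hki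
    obtain ⟨q, hqi, hqk⟩ := hthird i k
    have h := hquad x hx i q (fun h => hqi h.symm) q k
    simp [Ne.symm hqi, hqk, Ne.symm hki] at h
    exact h
  -- diagonal entries all agree
  have hdiag : ∀ x ∈ Ω, ∀ k : Fin n, B x k k = B x i0 i0 := by
    intro x hx k
    rcases eq_or_ne k i0 with h | h
    · rw [h]
    · have hq := hquad x hx k i0 h i0 k
      simpa [h, Ne.symm h] using hq
  -- the common diagonal value has zero derivative
  have hczero : ∀ x ∈ Ω, fderiv ℝ (fun y => B y i0 i0) x = 0 := by
    intro x hx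
    have hnhds : Ω ∈ nhds x := hΩo.mem_nhds hx
    have hdir : ∀ j : Fin n, fderiv ℝ (fun y => B y i0 i0) x (Pi.single j 1) = 0 := by
      intro j
      obtain ⟨k, hkj, _⟩ := hthird j j
      have he1 : (fun y => B y i0 i0) =ᶠ[nhds x] fun y => B y k k :=
        Filter.eventuallyEq_of_mem hnhds fun y hy => (hdiag y hy k).symm
      have he2 : (fun y => B y j k) =ᶠ[nhds x] fun _ => (0:ℝ) :=
        Filter.eventuallyEq_of_mem hnhds fun y hy => hoff y hy j k (Ne.symm hkj)
      rw [he1.fderiv_eq, hlin x hx j k k, he2.fderiv_eq]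
      simp
    refine ContinuousLinearMap.ext fun v => ?_
    have hv : v = ∑ i, v i • (Pi.single i (1:ℝ) : Fin n → ℝ) := by
      conv_lhs => rw [← Finset.univ_sum_single v]
      congr 1; funext i; rw [← Pi.single_smul, smul_eq_mul, mul_one]
    rw [hv, map_sum]
    simp [hdir]
  -- conclude
  have hconst : ∀ x ∈ Ω, B x i0 i0 = B x₀ i0 i0 := fun x hx =>
    stmt4_aux_const hΩo hΩc.isPreconnected (fun y hy => hBdiff y hy i0 i0) hczero x hx x₀ hx₀
  refine ⟨B x₀ i0 i0, ?_, ?_⟩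
  · intro hC
    have hB0 : Matrix.of (B x₀) = 0 := by
      ext i j
      simp only [Matrix.of_apply, Matrix.zero_apply]
      rcases eq_or_ne i j with h | h
      · rw [h, hdiag x₀ hx₀ j, hC]
      · exact hoff x₀ hx₀ i j h
    have hu := hBinv x₀ hx₀
    rw [hB0, Matrix.isUnit_iff_isUnit_det] at hu
    simp [Matrix.det_zero] at hu
  · intro x hx
    ext i j
    simp only [Matrix.of_apply, Matrix.smul_apply, Matrix.one_apply, smul_eq_mul]
    rcases eq_or_ne i j with h | h
    · subst h
      rw [hdiag x hx i, hconst x hx]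
      simp
    · simp [h, hoff x hx i j h]
end

section
/- Let g : ℝⁿ → Symₙ(ℝ) be a smooth map taking values in symmetric positive definite n×n matrices, let h : ℝⁿ → Symₙ(ℝ) be smooth, let u : ℝⁿ → ℝ be smooth, and fix x ∈ ℝⁿ. For a smooth positive-definite-valued metric coefficient field a, write Δ_a u(y) = det(a(y))^{−1/2} ∑_{j,k} ∂_j( det(a)^{1/2} (a⁻¹)_{jk} ∂_k u )(y). Then the function ε ↦ Δ_{g−εh} u(x), defined for ε in a neighborhood of 0, is differentiable at ε = 0 with derivative det(g(x))^{−1/2} ∑_{j,k} ∂_j( det(g)^{1/2} (g⁻¹ h g⁻¹)_{jk} ∂_k u )(x) − (1/2) ∑_{j,k} ∂_j( tr(g⁻¹h) )(x) · (g(x)⁻¹)_{jk} · ∂_k u(x). -/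
/-- The Laplace–Beltrami operator in coordinates for a metric coefficient field `a`:
`Δ_a u(y) = det(a(y))^{−1/2} ∑_{j,k} ∂_j( det(a)^{1/2} (a⁻¹)_{jk} ∂_k u )(y)`. -/
noncomputable def lapBeltrami (n : ℕ) (a : (Fin n → ℝ) → Fin n → Fin n → ℝ)
    (u : (Fin n → ℝ) → ℝ) (y : Fin n → ℝ) : ℝ :=
  (Real.sqrt (Matrix.of (a y)).det)⁻¹ *
    ∑ j, fderiv ℝ
      (fun z => ∑ k,
        Real.sqrt (Matrix.of (a z)).det * (Matrix.of (a z))⁻¹ j k *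
          fderiv ℝ u z (Pi.single k 1))
      y (Pi.single j 1)

open Matrix ContDiff
attribute [local instance] Matrix.linftyOpNormedRing Matrix.linftyOpNormedAlgebra

section
variable {n : ℕ}



/-- entry evaluation as a continuous linear map -/
noncomputable def entryCLM (j k : Fin n) : Matrix (Fin n) (Fin n) ℝ →L[ℝ] ℝ :=
  LinearMap.toContinuousLinearMap
    { toFun := fun m => m j k, map_add' := fun _ _ => rfl, map_smul' := fun _ _ => rfl }

@[simp] lemma entryCLM_apply (j k : Fin n) (m : Matrix (Fin n) (Fin n) ℝ) :
    entryCLM j k m = m j k := rfl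

/-- `Matrix.of` as a continuous linear map -/
noncomputable def ofCLM (n : ℕ) : (Fin n → Fin n → ℝ) →L[ℝ] Matrix (Fin n) (Fin n) ℝ :=
  LinearMap.toContinuousLinearMap
    { toFun := fun m => Matrix.of m, map_add' := fun _ _ => rfl, map_smul' := fun _ _ => rfl }

@[simp] lemma ofCLM_apply (m : Fin n → Fin n → ℝ) : ofCLM n m = Matrix.of m := rfl

lemma contDiff_det {m : WithTop ℕ∞} :
    ContDiff ℝ m (fun A : Matrix (Fin n) (Fin n) ℝ => A.det) := by
  simp only [Matrix.det_apply']
  exact ContDiff.sum fun σ _ =>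
    contDiff_const.mul (contDiff_prod fun i _ => (entryCLM (σ i) i).contDiff)

lemma hasDerivAt_det_path (A B : Matrix (Fin n) (Fin n) ℝ) (hA : IsUnit A.det) :
    HasDerivAt (fun ε : ℝ => (A - ε • B).det) (-(A.det * (A⁻¹ * B).trace)) 0 := by
  have hAB : ∀ ε : ℝ, A - ε • B = A * (1 + ε • (-(A⁻¹ * B))) := by
    intro ε
    rw [mul_add, mul_one, smul_neg, mul_neg, Matrix.mul_smul, ← Matrix.mul_assoc,
      A.mul_nonsing_inv hA, Matrix.one_mul, ← sub_eq_add_neg]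
  set C := -(A⁻¹ * B) with hC
  set Q := (1 + (Polynomial.X : Polynomial ℝ) • C.map (⇑Polynomial.C)).det.divX.divX with hQ
  have hdet : ∀ ε : ℝ, (A - ε • B).det
      = A.det * (1 + C.trace * ε + Polynomial.eval ε Q * ε ^ 2) := by
    intro ε
    rw [hAB ε, Matrix.det_mul, Matrix.det_one_add_smul]
  have h1 : HasDerivAt (fun ε : ℝ => A.det * (1 + C.trace * ε + Polynomial.eval ε Q * ε ^ 2))
      (A.det * C.trace) 0 := by
    have h2 : HasDerivAt (fun ε : ℝ => Polynomial.eval ε Q * ε ^ 2)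
        (Polynomial.eval 0 (Polynomial.derivative Q) * 0 ^ 2 +
          Polynomial.eval 0 Q * (↑2 * 0 ^ 1)) 0 :=
      (Q.hasDerivAt 0).mul (hasDerivAt_pow 2 0)
    have h3 : HasDerivAt (fun ε : ℝ => 1 + C.trace * ε + Polynomial.eval ε Q * ε ^ 2)
        (C.trace) 0 := by
      have h4 : HasDerivAt (fun ε : ℝ => 1 + C.trace * ε) C.trace 0 := by
        simpa using ((hasDerivAt_id (0:ℝ)).const_mul C.trace).const_add 1
      simpa using h4.fun_add h2
    simpa using h3.const_mul A.det
  have := h1.congr_of_eventuallyEq (Filter.Eventually.of_forall fun ε => (hdet ε))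
  simpa [hC, Matrix.trace_neg, mul_neg] using this

lemma hasDerivAt_inv_entry (A B : Matrix (Fin n) (Fin n) ℝ) (hA : IsUnit A.det) (j k : Fin n) :
    HasDerivAt (fun ε : ℝ => (A - ε • B)⁻¹ j k) ((A⁻¹ * B * A⁻¹) j k) 0 := by
  have hU : IsUnit A := (Matrix.isUnit_iff_isUnit_det A).2 hA
  obtain ⟨w, rfl⟩ := hU
  have path : HasDerivAt (fun ε : ℝ => (w : Matrix (Fin n) (Fin n) ℝ) - ε • B) (-B) 0 := by
    have := ((hasDerivAt_id (0:ℝ)).smul_const B).const_sub (w : Matrix (Fin n) (Fin n) ℝ)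
    simp only [id, one_smul] at this; exact this
  have hinv := hasFDerivAt_ringInverse (𝕜 := ℝ) w
  have hcomp : HasDerivAt (fun ε : ℝ =>
      Ring.inverse ((w : Matrix (Fin n) (Fin n) ℝ) - ε • B))
      ((-(ContinuousLinearMap.mulLeftRight ℝ _ (↑w⁻¹) (↑w⁻¹))) (-B)) 0 := by
    have h0 : ((w : Matrix (Fin n) (Fin n) ℝ) - (0:ℝ) • B) = (w : Matrix (Fin n) (Fin n) ℝ) := by
      simp
    have hinv' : HasFDerivAt (𝕜 := ℝ) Ring.inverse
        (-(ContinuousLinearMap.mulLeftRight ℝ _ (↑w⁻¹) (↑w⁻¹)))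
        ((w : Matrix (Fin n) (Fin n) ℝ) - (0:ℝ) • B) := by rw [h0]; exact hinv
    exact hinv'.comp_hasDerivAt 0 path
  have hval : ((-(ContinuousLinearMap.mulLeftRight ℝ _
        ((w⁻¹ : _) : Matrix (Fin n) (Fin n) ℝ) (↑w⁻¹))) (-B))
      = ((w : Matrix (Fin n) (Fin n) ℝ)⁻¹ * B * (w : Matrix (Fin n) (Fin n) ℝ)⁻¹) := by
    simp [ContinuousLinearMap.mulLeftRight_apply, Matrix.coe_units_inv]
  have := (entryCLM j k).hasFDerivAt.comp_hasDerivAt 0 hcomp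
  simp only [hval] at this
  simp only [← Matrix.nonsing_inv_eq_ringInverse] at this; exact this

lemma hasDerivAt_sum_entry (A B : Matrix (Fin n) (Fin n) ℝ) (hA : 0 < A.det)
    (c : Fin n → ℝ) (j : Fin n) :
    HasDerivAt (fun ε : ℝ => ∑ k, Real.sqrt ((A - ε • B).det) * (A - ε • B)⁻¹ j k * c k)
      (∑ k, (Real.sqrt A.det * (A⁻¹ * B * A⁻¹) j k
        - 1 / 2 * (A⁻¹ * B).trace * Real.sqrt A.det * A⁻¹ j k) * c k) 0 := by
  have hU : IsUnit A.det := isUnit_iff_ne_zero.2 hA.ne'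
  have hdet := hasDerivAt_det_path A B hU
  have hs : HasDerivAt (fun ε : ℝ => Real.sqrt ((A - ε • B).det))
      (1 / (2 * Real.sqrt A.det) * -(A.det * (A⁻¹ * B).trace)) 0 := by
    have h0 : (A - (0:ℝ) • B).det = A.det := by simp
    have := (Real.hasDerivAt_sqrt (x := (A - (0:ℝ) • B).det)
      (by rw [h0]; exact hA.ne')).comp 0 hdet
    simpa [h0, Function.comp_def] using this
  have H := HasDerivAt.fun_sum (u := Finset.univ)
    (fun k _ => ((hs.fun_mul (hasDerivAt_inv_entry A B hU j k)).mul_const (c k)))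
  convert H using 1
  · exact rfl
  · exact rfl
  refine Finset.sum_congr rfl fun k _ => ?_
  have hss : Real.sqrt A.det * Real.sqrt A.det = A.det := Real.mul_self_sqrt hA.le
  have hs0 : Real.sqrt A.det ≠ 0 := ne_of_gt (Real.sqrt_pos.2 hA)
  simp only [zero_smul, sub_zero]
  field_simp
  linear_combination (-((A⁻¹ * B).trace * A⁻¹ j k * c k)) * hss

open ContinuousLinearMap in
theorem swap_deriv_fderiv {E : Type*} [NormedAddCommGroup E] [NormedSpace ℝ E]
    {f : ℝ × E → ℝ} {f' : E → ℝ} {x : E} (v : E)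
    (hf : ContDiffAt ℝ 2 f (0, x))
    (hf' : ∀ᶠ z in nhds x, HasDerivAt (fun ε => f (ε, z)) (f' z) 0) :
    HasDerivAt (fun ε : ℝ => fderiv ℝ (fun z => f (ε, z)) x v) (fderiv ℝ f' x v) 0 := by
  have hdiff : ∀ᶠ p in nhds ((0 : ℝ), x), DifferentiableAt ℝ f p :=
    (hf.eventually (by simp)).mono fun p hp => hp.differentiableAt two_ne_zero
  set G := fderiv ℝ f with hGdef
  have hG : ContDiffAt ℝ 1 G (0, x) := hf.fderiv_right (by norm_num)
  have hGd : DifferentiableAt ℝ G ((0 : ℝ), x) := hG.differentiableAt one_ne_zero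
  have key : ∀ p : ℝ × E, DifferentiableAt ℝ f p →
      fderiv ℝ (fun z => f (p.1, z)) p.2 = (G p).comp (inr ℝ ℝ E) := by
    intro p hp
    exact (hp.hasFDerivAt.comp p.2 (hasFDerivAt_prodMk_right p.1 p.2)).fderiv
  have hpath : HasDerivAt (fun ε : ℝ => (ε, x)) ((1 : ℝ), (0 : E)) 0 :=
    (hasDerivAt_id 0).prodMk (hasDerivAt_const 0 x)
  have hφ : HasDerivAt (fun ε : ℝ => G (ε, x)) (fderiv ℝ G (0, x) (1, 0)) 0 :=
    hGd.hasFDerivAt.comp_hasDerivAt 0 hpath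
  have hφv : HasDerivAt (fun ε : ℝ => G (ε, x) ((0 : ℝ), v))
      (fderiv ℝ G (0, x) (1, 0) ((0 : ℝ), v)) 0 :=
    (ContinuousLinearMap.apply ℝ ℝ ((0 : ℝ), v)).hasFDerivAt.comp_hasDerivAt 0 hφ
  have hev : (fun ε : ℝ => fderiv ℝ (fun z => f (ε, z)) x v)
      =ᶠ[nhds 0] fun ε : ℝ => G (ε, x) ((0 : ℝ), v) := by
    have hc : ContinuousAt (fun ε : ℝ => (ε, x)) 0 :=
      (continuous_id.prodMk continuous_const).continuousAt
    filter_upwards [hc.preimage_mem_nhds hdiff] with ε hε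
    rw [key (ε, x) hε]
    simp
  have hmain : HasDerivAt (fun ε : ℝ => fderiv ℝ (fun z => f (ε, z)) x v)
      (fderiv ℝ G (0, x) (1, 0) ((0 : ℝ), v)) 0 := hφv.congr_of_eventuallyEq hev
  have hsymm := hf.isSymmSndFDerivAt (by simp)
  have hswap : fderiv ℝ G (0, x) (1, 0) ((0 : ℝ), v)
      = fderiv ℝ G (0, x) ((0 : ℝ), v) (1, 0) := hsymm _ _
  have hF₁ : (fun z => G ((0 : ℝ), z) ((1 : ℝ), (0 : E))) =ᶠ[nhds x] f' := by
    have hc : ContinuousAt (fun z : E => ((0 : ℝ), z)) x :=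
      (continuous_const.prodMk continuous_id).continuousAt
    filter_upwards [hc.preimage_mem_nhds hdiff, hf'] with z hz hz'
    have h2 : HasDerivAt (fun ε => f (ε, z)) (G (0, z) ((1 : ℝ), (0 : E))) 0 :=
      hz.hasFDerivAt.comp_hasDerivAt 0 ((hasDerivAt_id 0).prodMk (hasDerivAt_const 0 z))
    exact h2.unique hz'
  have hins : HasFDerivAt (fun z : E => ((0 : ℝ), z)) (inr ℝ ℝ E) x :=
    hasFDerivAt_prodMk_right (0 : ℝ) x
  have hF₁d : HasFDerivAt (fun z => G ((0 : ℝ), z) ((1 : ℝ), (0 : E)))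
      (((ContinuousLinearMap.apply ℝ ℝ ((1 : ℝ), (0 : E))).comp (fderiv ℝ G (0, x))).comp
        (inr ℝ ℝ E)) x :=
    ((ContinuousLinearMap.apply ℝ ℝ ((1 : ℝ), (0 : E))).hasFDerivAt.comp _
      hGd.hasFDerivAt).comp x hins
  have hfin : fderiv ℝ f' x v = fderiv ℝ G (0, x) ((0 : ℝ), v) (1, 0) := by
    rw [← hF₁.fderiv_eq, hF₁d.fderiv]
    simp
  rw [hfin, ← hswap]
  exact hmain


variable {m : ℕ∞}

lemma contDiffAt_entry {E : Type*} [NormedAddCommGroup E] [NormedSpace ℝ E]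
    {F : E → Matrix (Fin n) (Fin n) ℝ} {x : E}
    (hF : ContDiffAt ℝ m F x) (j k : Fin n) : ContDiffAt ℝ m (fun z => F z j k) x := by
  exact ((entryCLM j k).contDiff.contDiffAt.comp x hF)

variable {g h : (Fin n → ℝ) → Fin n → Fin n → ℝ} {u : (Fin n → ℝ) → ℝ} {x : Fin n → ℝ}

lemma contDiffAt_ofM (hg : ContDiff ℝ (⊤ : ℕ∞) g) :
    ContDiff ℝ m (fun z => (Matrix.of (g z) : Matrix (Fin n) (Fin n) ℝ)) :=
  (ofCLM n).contDiff.comp (hg.of_le (by exact_mod_cast le_top))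

lemma contDiffAt_invG (hg : ContDiff ℝ (⊤ : ℕ∞) g) (hx : (Matrix.of (g x)).det ≠ 0) :
    ContDiffAt ℝ m (fun z => Ring.inverse (Matrix.of (g z) : Matrix (Fin n) (Fin n) ℝ)) x := by
  have hU : IsUnit (Matrix.of (g x) : Matrix (Fin n) (Fin n) ℝ) :=
    (Matrix.isUnit_iff_isUnit_det _).2 (isUnit_iff_ne_zero.2 hx)
  obtain ⟨w, hw⟩ := hU
  have h1 : ContDiffAt ℝ m Ring.inverse (Matrix.of (g x) : Matrix (Fin n) (Fin n) ℝ) :=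
    hw ▸ contDiffAt_ringInverse ℝ w
  exact h1.comp x (contDiffAt_ofM hg).contDiffAt

lemma contDiffAt_sqrtdet (hg : ContDiff ℝ (⊤ : ℕ∞) g) (hx : 0 < (Matrix.of (g x)).det) :
    ContDiffAt ℝ m (fun z => Real.sqrt (Matrix.of (g z)).det) x :=
  (Real.contDiffAt_sqrt hx.ne').comp x (contDiff_det.comp (contDiffAt_ofM hg)).contDiffAt

lemma contDiffAt_du (hu : ContDiff ℝ (⊤ : ℕ∞) u) (k : Fin n) :
    ContDiff ℝ m (fun z => fderiv ℝ u z (Pi.single k 1)) :=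
  (hu.fderiv_right (by exact_mod_cast le_top)).clm_apply contDiff_const
end

section
variable {n : ℕ}

noncomputable def auxQ (n : ℕ) (g : (Fin n → ℝ) → Fin n → Fin n → ℝ)
    (u : (Fin n → ℝ) → ℝ) (j : Fin n) (z : Fin n → ℝ) : ℝ :=
  ∑ k, Real.sqrt (Matrix.of (g z)).det * (Matrix.of (g z))⁻¹ j k *
    fderiv ℝ u z (Pi.single k 1)

noncomputable def auxP (n : ℕ) (g h : (Fin n → ℝ) → Fin n → Fin n → ℝ)
    (u : (Fin n → ℝ) → ℝ) (j : Fin n) (z : Fin n → ℝ) : ℝ :=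
  ∑ k, Real.sqrt (Matrix.of (g z)).det *
    ((Matrix.of (g z))⁻¹ * Matrix.of (h z) * (Matrix.of (g z))⁻¹) j k *
    fderiv ℝ u z (Pi.single k 1)

noncomputable def auxTr (n : ℕ) (g h : (Fin n → ℝ) → Fin n → Fin n → ℝ)
    (z : Fin n → ℝ) : ℝ :=
  ((Matrix.of (g z))⁻¹ * Matrix.of (h z)).trace

noncomputable def auxPsi (n : ℕ) (g h : (Fin n → ℝ) → Fin n → Fin n → ℝ)
    (u : (Fin n → ℝ) → ℝ) (j : Fin n) (p : ℝ × (Fin n → ℝ)) : ℝ :=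
  ∑ k, Real.sqrt ((Matrix.of (g p.2) - p.1 • Matrix.of (h p.2)).det) *
    (Matrix.of (g p.2) - p.1 • Matrix.of (h p.2))⁻¹ j k *
    fderiv ℝ u p.2 (Pi.single k 1)

variable {m : ℕ∞} {g h : (Fin n → ℝ) → Fin n → Fin n → ℝ} {u : (Fin n → ℝ) → ℝ}
  {x : Fin n → ℝ}

lemma contDiffAt_auxQ (hg : ContDiff ℝ (⊤ : ℕ∞) g) (hu : ContDiff ℝ (⊤ : ℕ∞) u)
    (hx : 0 < (Matrix.of (g x)).det) (j : Fin n) :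
    ContDiffAt ℝ m (auxQ n g u j) x := by
  unfold auxQ
  simp only [Matrix.nonsing_inv_eq_ringInverse]
  exact ContDiffAt.sum fun k _ =>
    (((contDiffAt_sqrtdet hg hx).mul (contDiffAt_entry (contDiffAt_invG hg hx.ne') j k)).mul
      ((contDiffAt_du hu k).contDiffAt))

lemma contDiffAt_auxP (hg : ContDiff ℝ (⊤ : ℕ∞) g) (hh : ContDiff ℝ (⊤ : ℕ∞) h) (hu : ContDiff ℝ (⊤ : ℕ∞) u)
    (hx : 0 < (Matrix.of (g x)).det) (j : Fin n) :
    ContDiffAt ℝ m (auxP n g h u j) x := by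
  unfold auxP
  simp only [Matrix.nonsing_inv_eq_ringInverse]
  refine ContDiffAt.sum fun k _ => ContDiffAt.mul (ContDiffAt.mul (contDiffAt_sqrtdet hg hx)
    (contDiffAt_entry ?_ j k)) ((contDiffAt_du hu k).contDiffAt)
  exact ((contDiffAt_invG hg hx.ne').mul ((contDiffAt_ofM hh).contDiffAt)).mul
    (contDiffAt_invG hg hx.ne')

lemma contDiffAt_auxTr (hg : ContDiff ℝ (⊤ : ℕ∞) g) (hh : ContDiff ℝ (⊤ : ℕ∞) h)
    (hx : 0 < (Matrix.of (g x)).det) :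
    ContDiffAt ℝ m (auxTr n g h) x := by
  unfold auxTr
  simp only [Matrix.nonsing_inv_eq_ringInverse, Matrix.trace, Matrix.diag]
  exact ContDiffAt.sum fun i _ =>
    contDiffAt_entry ((contDiffAt_invG hg hx.ne').mul ((contDiffAt_ofM hh).contDiffAt)) i i

lemma contDiffAt_auxPsi (hg : ContDiff ℝ (⊤ : ℕ∞) g) (hh : ContDiff ℝ (⊤ : ℕ∞) h) (hu : ContDiff ℝ (⊤ : ℕ∞) u)
    (hx : 0 < (Matrix.of (g x)).det) (j : Fin n) :
    ContDiffAt ℝ m (auxPsi n g h u j) ((0 : ℝ), x) := by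
  have haM : ContDiff ℝ m (fun p : ℝ × (Fin n → ℝ) =>
      (Matrix.of (g p.2) - p.1 • Matrix.of (h p.2) : Matrix (Fin n) (Fin n) ℝ)) :=
    ((contDiffAt_ofM hg).comp contDiff_snd).sub
      (contDiff_fst.smul ((contDiffAt_ofM hh).comp contDiff_snd))
  have h0 : (Matrix.of (g x) - (0:ℝ) • Matrix.of (h x) : Matrix (Fin n) (Fin n) ℝ)
      = Matrix.of (g x) := by simp
  have hsq : ContDiffAt ℝ m Real.sqrt
      ((Matrix.of (g x) - (0:ℝ) • Matrix.of (h x) : Matrix (Fin n) (Fin n) ℝ)).det := by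
    rw [h0]; exact Real.contDiffAt_sqrt hx.ne'
  have hdetJ : ContDiffAt ℝ m (fun p : ℝ × (Fin n → ℝ) =>
      ((Matrix.of (g p.2) - p.1 • Matrix.of (h p.2) : Matrix (Fin n) (Fin n) ℝ)).det)
      ((0 : ℝ), x) := (contDiff_det.comp haM).contDiffAt
  have hsqrtJ : ContDiffAt ℝ m (fun p : ℝ × (Fin n → ℝ) =>
      Real.sqrt ((Matrix.of (g p.2) - p.1 • Matrix.of (h p.2)).det)) ((0 : ℝ), x) := by
    exact ContDiffAt.comp (g := Real.sqrt)
      (f := fun p : ℝ × (Fin n → ℝ) => ((Matrix.of (g p.2) - p.1 • Matrix.of (h p.2)).det))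
      ((0:ℝ), x) hsq hdetJ
  have hU : IsUnit (Matrix.of (g x) : Matrix (Fin n) (Fin n) ℝ) :=
    (Matrix.isUnit_iff_isUnit_det _).2 (isUnit_iff_ne_zero.2 hx.ne')
  obtain ⟨w, hw⟩ := hU
  have hinv0 : ContDiffAt ℝ m Ring.inverse
      ((Matrix.of (g x) - (0:ℝ) • Matrix.of (h x) : Matrix (Fin n) (Fin n) ℝ)) := by
    rw [h0, ← hw]; exact contDiffAt_ringInverse ℝ w
  have hinvJ : ContDiffAt ℝ m (fun p : ℝ × (Fin n → ℝ) =>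
      Ring.inverse (Matrix.of (g p.2) - p.1 • Matrix.of (h p.2) : Matrix (Fin n) (Fin n) ℝ))
      ((0 : ℝ), x) := by exact ContDiffAt.comp ((0:ℝ), x) hinv0 haM.contDiffAt
  unfold auxPsi
  simp only [Matrix.nonsing_inv_eq_ringInverse]
  exact ContDiffAt.sum fun k _ =>
    ((hsqrtJ.mul (contDiffAt_entry (x := ((0:ℝ),x)) hinvJ j k)).mul
      (((contDiffAt_du hu k).comp contDiff_snd).contDiffAt))

lemma auxPsi_zero (j : Fin n) :
    (fun z => auxPsi n g h u j ((0 : ℝ), z)) = auxQ n g u j := by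
  funext z; simp [auxPsi, auxQ]

lemma hasDerivAt_auxPsi {z : Fin n → ℝ} (hz : 0 < (Matrix.of (g z)).det) (j : Fin n) :
    HasDerivAt (fun ε : ℝ => auxPsi n g h u j (ε, z))
      (auxP n g h u j z - 1 / 2 * (auxTr n g h z * auxQ n g u j z)) 0 := by
  have H := hasDerivAt_sum_entry (Matrix.of (g z)) (Matrix.of (h z)) hz
    (fun k => fderiv ℝ u z (Pi.single k 1)) j
  unfold auxPsi
  convert H using 1
  unfold auxP auxTr auxQ
  rw [Finset.mul_sum, Finset.mul_sum, ← Finset.sum_sub_distrib]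
  exact Finset.sum_congr rfl fun k _ => by ring
end


section
variable {n : ℕ} {g h : (Fin n → ℝ) → Fin n → Fin n → ℝ} {u : (Fin n → ℝ) → ℝ} {x : Fin n → ℝ}

lemma fderiv_fprime (hg : ContDiff ℝ (⊤ : ℕ∞) g) (hh : ContDiff ℝ (⊤ : ℕ∞) h) (hu : ContDiff ℝ (⊤ : ℕ∞) u)
    (hx : 0 < (Matrix.of (g x)).det) (j : Fin n) :
    fderiv ℝ (fun z => auxP n g h u j z - 1 / 2 * (auxTr n g h z * auxQ n g u j z)) x
        (Pi.single j 1)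
      = fderiv ℝ (auxP n g h u j) x (Pi.single j 1)
        - 1 / 2 * (auxTr n g h x * fderiv ℝ (auxQ n g u j) x (Pi.single j 1)
          + auxQ n g u j x * fderiv ℝ (auxTr n g h) x (Pi.single j 1)) := by
  have hP := (contDiffAt_auxP (m := 1) hg hh hu hx j).differentiableAt one_ne_zero
  have hQ := (contDiffAt_auxQ (m := 1) hg hu hx j).differentiableAt one_ne_zero
  have hT := (contDiffAt_auxTr (m := 1) hg hh hx).differentiableAt one_ne_zero
  have hcomb := HasFDerivAt.fun_sub hP.hasFDerivAt
    ((HasFDerivAt.fun_mul hT.hasFDerivAt hQ.hasFDerivAt).const_mul (1 / 2 : ℝ))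
  rw [hcomb.fderiv]
  simp [smul_eq_mul]
  ring

end

/-- first variation of the Laplace–Beltrami operator in the metric. -/
theorem stmt_11 (n : ℕ) (g h : (Fin n → ℝ) → Fin n → Fin n → ℝ)
    (hg : ContDiff ℝ (⊤ : ℕ∞) g) (hh : ContDiff ℝ (⊤ : ℕ∞) h)
    (hgpd : ∀ y, (Matrix.of (g y)).PosDef) (hsymm : ∀ y j k, h y j k = h y k j)
    (u : (Fin n → ℝ) → ℝ) (hu : ContDiff ℝ (⊤ : ℕ∞) u) (x : Fin n → ℝ) :
    HasDerivAt (fun ε : ℝ => lapBeltrami n (fun y => g y - ε • h y) u x)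
      ((Real.sqrt (Matrix.of (g x)).det)⁻¹ *
          ∑ j, fderiv ℝ
            (fun z => ∑ k,
              Real.sqrt (Matrix.of (g z)).det *
                ((Matrix.of (g z))⁻¹ * Matrix.of (h z) * (Matrix.of (g z))⁻¹) j k *
                fderiv ℝ u z (Pi.single k 1))
            x (Pi.single j 1)
        - (1 / 2) *
          ∑ j, ∑ k,
            fderiv ℝ (fun z => ((Matrix.of (g z))⁻¹ * Matrix.of (h z)).trace) x
              (Pi.single j 1) *
              (Matrix.of (g x))⁻¹ j k * fderiv ℝ u x (Pi.single k 1)) 0 := by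
  have hDpos : 0 < (Matrix.of (g x)).det := (hgpd x).det_pos
  have hsq0 : Real.sqrt (Matrix.of (g x)).det ≠ 0 := ne_of_gt (Real.sqrt_pos.2 hDpos)
  have hss : Real.sqrt (Matrix.of (g x)).det * Real.sqrt (Matrix.of (g x)).det
      = (Matrix.of (g x)).det := Real.mul_self_sqrt hDpos.le
  have hU : IsUnit (Matrix.of (g x) : Matrix (Fin n) (Fin n) ℝ).det :=
    isUnit_iff_ne_zero.2 hDpos.ne'
  have hpt : ∀ j : Fin n, ∀ z, HasDerivAt (fun ε : ℝ => auxPsi n g h u j (ε, z))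
      (auxP n g h u j z - 1 / 2 * (auxTr n g h z * auxQ n g u j z)) 0 :=
    fun j z => hasDerivAt_auxPsi (hgpd z).det_pos j
  have hswap : ∀ j : Fin n, HasDerivAt
      (fun ε : ℝ => fderiv ℝ (fun z => auxPsi n g h u j (ε, z)) x (Pi.single j 1))
      (fderiv ℝ (fun z => auxP n g h u j z - 1 / 2 * (auxTr n g h z * auxQ n g u j z)) x
        (Pi.single j 1)) 0 := fun j =>
    swap_deriv_fderiv _ (contDiffAt_auxPsi (m := 2) hg hh hu hDpos j)
      (Filter.Eventually.of_forall (hpt j))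
  have hS : HasDerivAt (fun ε : ℝ =>
        ∑ j, fderiv ℝ (fun z => auxPsi n g h u j (ε, z)) x (Pi.single j 1))
      (∑ j, fderiv ℝ (fun z => auxP n g h u j z - 1 / 2 * (auxTr n g h z * auxQ n g u j z)) x
        (Pi.single j 1)) 0 := HasDerivAt.fun_sum fun j _ => hswap j
  have hdet := hasDerivAt_det_path (Matrix.of (g x)) (Matrix.of (h x)) hU
  have hsqrt : HasDerivAt
      (fun ε : ℝ => Real.sqrt ((Matrix.of (g x) - ε • Matrix.of (h x)).det))
      (1 / (2 * Real.sqrt (Matrix.of (g x)).det) *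
        -((Matrix.of (g x)).det * ((Matrix.of (g x))⁻¹ * Matrix.of (h x)).trace)) 0 := by
    have h0 : ((Matrix.of (g x) : Matrix (Fin n) (Fin n) ℝ) - (0:ℝ) • Matrix.of (h x)).det
        = (Matrix.of (g x)).det := by simp
    have := (Real.hasDerivAt_sqrt
      (x := ((Matrix.of (g x) : Matrix (Fin n) (Fin n) ℝ) - (0:ℝ) • Matrix.of (h x)).det)
      (by rw [h0]; exact hDpos.ne')).comp 0 hdet
    simpa [h0, Function.comp_def] using this
  have hAinv : HasDerivAt
      (fun ε : ℝ => (Real.sqrt ((Matrix.of (g x) - ε • Matrix.of (h x)).det))⁻¹)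
      (-(1 / (2 * Real.sqrt (Matrix.of (g x)).det) *
          -((Matrix.of (g x)).det * ((Matrix.of (g x))⁻¹ * Matrix.of (h x)).trace)) /
        Real.sqrt (Matrix.of (g x)).det ^ 2) 0 := by
    have := hsqrt.fun_inv (by simpa using hsq0)
    simpa using this
  have H := hAinv.fun_mul hS
  have hFeq : (fun ε : ℝ => lapBeltrami n (fun y => g y - ε • h y) u x)
      = fun ε : ℝ => (Real.sqrt ((Matrix.of (g x) - ε • Matrix.of (h x)).det))⁻¹ *
        ∑ j, fderiv ℝ (fun z => auxPsi n g h u j (ε, z)) x (Pi.single j 1) := by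
    funext ε; rfl
  rw [hFeq]
  convert H using 1
  · exact rfl
  · exact rfl
  -- now prove the value equality
  simp only [zero_smul, sub_zero, auxPsi_zero]
  have hPdef : ∀ j : Fin n, (fun z => ∑ k,
      Real.sqrt (Matrix.of (g z)).det *
        ((Matrix.of (g z))⁻¹ * Matrix.of (h z) * (Matrix.of (g z))⁻¹) j k *
        fderiv ℝ u z (Pi.single k 1)) = auxP n g h u j := fun j => rfl
  have hTdef : (fun z => ((Matrix.of (g z))⁻¹ * Matrix.of (h z)).trace) = auxTr n g h := rfl
  simp only [hPdef, hTdef]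
  rw [Finset.sum_congr rfl fun j _ => fderiv_fprime hg hh hu hDpos j]
  have hq : ∀ j : Fin n, auxQ n g u j x
      = Real.sqrt (Matrix.of (g x)).det *
        ∑ k, (Matrix.of (g x))⁻¹ j k * fderiv ℝ u x (Pi.single k 1) := by
    intro j; unfold auxQ; rw [Finset.mul_sum]
    exact Finset.sum_congr rfl fun k _ => by ring
  simp only [hq]
  have hsum2 : ∑ j, ∑ k, fderiv ℝ (auxTr n g h) x (Pi.single j 1) *
        (Matrix.of (g x))⁻¹ j k * fderiv ℝ u x (Pi.single k 1)
      = ∑ j, fderiv ℝ (auxTr n g h) x (Pi.single j 1) *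
        ∑ k, (Matrix.of (g x))⁻¹ j k * fderiv ℝ u x (Pi.single k 1) := by
    refine Finset.sum_congr rfl fun j _ => ?_
    rw [Finset.mul_sum]
    exact Finset.sum_congr rfl fun k _ => by ring
  rw [hsum2]
  have hsum1 : ∑ j, (fderiv ℝ (auxP n g h u j) x (Pi.single j 1)
        - 1 / 2 * (auxTr n g h x * fderiv ℝ (auxQ n g u j) x (Pi.single j 1)
          + (Real.sqrt (Matrix.of (g x)).det *
              ∑ k, (Matrix.of (g x))⁻¹ j k * fderiv ℝ u x (Pi.single k 1)) *
            fderiv ℝ (auxTr n g h) x (Pi.single j 1)))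
      = (∑ j, fderiv ℝ (auxP n g h u j) x (Pi.single j 1))
        - 1 / 2 * auxTr n g h x * (∑ j, fderiv ℝ (auxQ n g u j) x (Pi.single j 1))
        - 1 / 2 * Real.sqrt (Matrix.of (g x)).det *
          (∑ j, fderiv ℝ (auxTr n g h) x (Pi.single j 1) *
            ∑ k, (Matrix.of (g x))⁻¹ j k * fderiv ℝ u x (Pi.single k 1)) := by
    rw [Finset.sum_sub_distrib]
    have h1 : ∑ j, (1 / 2 * (auxTr n g h x * fderiv ℝ (auxQ n g u j) x (Pi.single j 1)
          + (Real.sqrt (Matrix.of (g x)).det *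
              ∑ k, (Matrix.of (g x))⁻¹ j k * fderiv ℝ u x (Pi.single k 1)) *
            fderiv ℝ (auxTr n g h) x (Pi.single j 1)))
        = 1 / 2 * auxTr n g h x * (∑ j, fderiv ℝ (auxQ n g u j) x (Pi.single j 1))
          + 1 / 2 * Real.sqrt (Matrix.of (g x)).det *
            (∑ j, fderiv ℝ (auxTr n g h) x (Pi.single j 1) *
              ∑ k, (Matrix.of (g x))⁻¹ j k * fderiv ℝ u x (Pi.single k 1)) := by
      rw [Finset.mul_sum, Finset.mul_sum, ← Finset.sum_add_distrib]
      exact Finset.sum_congr rfl fun j _ => by ring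
    rw [h1]; ring
  rw [hsum1]
  -- pure scalar algebra now
  have hTx : auxTr n g h x = ((Matrix.of (g x))⁻¹ * Matrix.of (h x)).trace := rfl
  rw [hTx]
  field_simp
  linear_combination (((Matrix.of (g x))⁻¹ * Matrix.of (h x)).trace *
    ∑ j, fderiv ℝ (auxQ n g u j) x (Pi.single j 1)) * hss
end

section
/- Let T > 0, let γ : [0,T] → ℝⁿ be an injective C¹ curve with γ'(t) ≠ 0 for all t, let t₀ ∈ [0,T], and let K ⊆ ℝⁿ be a compact set containing γ(t₀) in its interior. Let X be the real normed space of bounded continuous vector fields A : ℝⁿ → ℝⁿ whose support is contained in K, equipped with the supremum norm. Then the set { A ∈ X : exp( i·∫₀ᵀ ⟨A(γ(t)), γ'(t)⟩ dt ) ≠ 1 } is open and dense in X, where exp is the complex exponential and i the imaginary unit. -/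
/-- The space of bounded continuous vector fields on `ℝⁿ` supported in `K`, with the
supremum-norm (uniform) topology inherited from bounded continuous functions. -/
abbrev VectorFieldsIn (n : ℕ) (K : Set (Fin n → ℝ)) : Type _ :=
  {A : BoundedContinuousFunction (Fin n → ℝ) (Fin n → ℝ) // tsupport ⇑A ⊆ K}

lemma integrand_cont {n : ℕ} (γ : ℝ → Fin n → ℝ) (hγc : Continuous γ)
    (hd : Continuous (deriv γ)) (A : BoundedContinuousFunction (Fin n → ℝ) (Fin n → ℝ)) :
    Continuous (fun t => ∑ j, A (γ t) j * deriv γ t j) :=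
  continuous_finset_sum _ fun j _ =>
    ((continuous_apply j).comp (A.continuous.comp hγc)).mul ((continuous_apply j).comp hd)

lemma L_cont {n : ℕ} {K : Set (Fin n → ℝ)} (γ : ℝ → Fin n → ℝ) (hγc : Continuous γ)
    (hd : Continuous (deriv γ)) (T : ℝ) :
    Continuous (fun A : VectorFieldsIn n K =>
      ∫ t in (0:ℝ)..T, ∑ j, A.1 (γ t) j * deriv γ t j) := by
  obtain ⟨M₀, hM₀⟩ := isCompact_uIcc.exists_bound_of_continuousOn
    (s := Set.uIcc (0:ℝ) T) hd.continuousOn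
  set M := max M₀ 0 with hMdef
  have hM : ∀ t ∈ Set.uIcc (0:ℝ) T, ‖deriv γ t‖ ≤ M := fun t ht =>
    (hM₀ t ht).trans (le_max_left _ _)
  have hMnn : 0 ≤ M := le_max_right _ _
  have hC : 0 ≤ (n : ℝ) * M * |T - 0| := by positivity
  refine (LipschitzWith.of_dist_le_mul (K := ((n : ℝ) * M * |T - 0|).toNNReal)
    (fun A B => ?_)).continuous
  rw [Real.coe_toNNReal _ hC, Real.dist_eq]
  have hint : ∀ C : BoundedContinuousFunction (Fin n → ℝ) (Fin n → ℝ),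
      IntervalIntegrable (fun t => ∑ j, C (γ t) j * deriv γ t j) MeasureTheory.volume 0 T :=
    fun C => (integrand_cont γ hγc hd C).intervalIntegrable 0 T
  rw [← intervalIntegral.integral_sub (hint A.1) (hint B.1)]
  have key : ∀ t ∈ Set.uIoc (0:ℝ) T,
      ‖(∑ j, A.1 (γ t) j * deriv γ t j) - ∑ j, B.1 (γ t) j * deriv γ t j‖
        ≤ (n : ℝ) * M * dist A B := by
    intro t ht
    have htI : t ∈ Set.uIcc (0:ℝ) T := Set.uIoc_subset_uIcc ht
    rw [← Finset.sum_sub_distrib]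
    calc ‖∑ j, (A.1 (γ t) j * deriv γ t j - B.1 (γ t) j * deriv γ t j)‖
        ≤ ∑ j : Fin n, ‖A.1 (γ t) j * deriv γ t j - B.1 (γ t) j * deriv γ t j‖ :=
          norm_sum_le _ _
      _ ≤ ∑ _j : Fin n, dist A B * M := by
          refine Finset.sum_le_sum fun j _ => ?_
          rw [← sub_mul, norm_mul]
          refine mul_le_mul ?_ ((hM t htI).trans' (norm_le_pi_norm _ j)) (norm_nonneg _)
            dist_nonneg
          have h1 : A.1 (γ t) j - B.1 (γ t) j = (A.1 (γ t) - B.1 (γ t)) j := rfl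
          rw [h1]
          refine (norm_le_pi_norm _ j).trans ?_
          rw [← dist_eq_norm]
          exact (BoundedContinuousFunction.dist_coe_le_dist (γ t)).trans
            (le_of_eq (Subtype.dist_eq A B).symm)
      _ = (n : ℝ) * M * dist A B := by
          rw [Finset.sum_const, Finset.card_univ, Fintype.card_fin, nsmul_eq_mul]; ring
  calc ‖∫ t in (0:ℝ)..T, ((∑ j, A.1 (γ t) j * deriv γ t j) - ∑ j, B.1 (γ t) j * deriv γ t j)‖
      ≤ (n : ℝ) * M * dist A B * |T - 0| :=
        intervalIntegral.norm_integral_le_of_norm_le_const key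
    _ = (n : ℝ) * M * |T - 0| * dist A B := by ring

lemma exists_bump (n : ℕ) (T : ℝ) (hT : 0 < T) (γ : ℝ → (Fin n → ℝ))
    (hγ : ContDiff ℝ 1 γ) (hinj : Set.InjOn γ (Set.Icc 0 T))
    (hγ' : ∀ t ∈ Set.Icc (0 : ℝ) T, deriv γ t ≠ 0)
    (t₀ : ℝ) (ht₀ : t₀ ∈ Set.Icc (0 : ℝ) T)
    (K : Set (Fin n → ℝ)) (hx : γ t₀ ∈ interior K) :
    ∃ B : BoundedContinuousFunction (Fin n → ℝ) (Fin n → ℝ), tsupport ⇑B ⊆ K ∧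
      0 < ∫ t in (0:ℝ)..T, ∑ j, B (γ t) j * deriv γ t j := by
  have hγc : Continuous γ := hγ.continuous
  have hd : Continuous (deriv γ) := hγ.continuous_deriv le_rfl
  set x₀ := γ t₀ with hx₀
  set v := deriv γ t₀ with hv
  have hv0 : v ≠ 0 := hγ' t₀ ht₀
  set h : ℝ → ℝ := fun t => ∑ j, v j * deriv γ t j with hh
  have hcont : Continuous h :=
    continuous_finset_sum _ fun j _ => continuous_const.mul ((continuous_apply j).comp hd)
  have hht₀ : 0 < h t₀ := by
    obtain ⟨j, hj⟩ := Function.ne_iff.mp hv0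
    exact Finset.sum_pos' (fun i _ => mul_self_nonneg _)
      ⟨j, Finset.mem_univ j, mul_self_pos.mpr hj⟩
  -- δ : h positive near t₀
  obtain ⟨δ, hδ0, hδ⟩ := Metric.isOpen_iff.mp (isOpen_Ioi.preimage hcont) t₀ hht₀
  -- the curve away from t₀ stays away from x₀
  set S : Set ℝ := Set.Icc 0 T ∩ {t | δ ≤ dist t t₀} with hS
  have hScompact : IsCompact S :=
    isCompact_Icc.inter_right (isClosed_le continuous_const
      (continuous_id.dist continuous_const))
  have hximg : x₀ ∉ γ '' S := by
    rintro ⟨t, ⟨htI, htd⟩, heq⟩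
    have : t = t₀ := hinj htI ht₀ heq
    rw [this] at htd
    simp at htd
    exact absurd htd (not_le.mpr hδ0)
  obtain ⟨r₁, hr₁0, hr₁⟩ := Metric.isOpen_iff.mp (hScompact.image hγc).isClosed.isOpen_compl
    x₀ hximg
  obtain ⟨r₂, hr₂0, hr₂⟩ := Metric.isOpen_iff.mp isOpen_interior x₀ hx
  set r : ℝ := min r₁ r₂ / 2 with hr
  have hr0 : 0 < r := by positivity
  have hrr₁ : r < r₁ := by
    have := min_le_left r₁ r₂; simp only [hr]; linarith
  have hrr₂ : r < r₂ := by
    have := min_le_right r₁ r₂; simp only [hr]; linarith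
  have hballK : Metric.closedBall x₀ r ⊆ K :=
    (Metric.closedBall_subset_ball hrr₂).trans (hr₂.trans interior_subset)
  have key : ∀ t ∈ Set.Icc (0:ℝ) T, γ t ∈ Metric.closedBall x₀ r → 0 < h t := by
    intro t htI htb
    by_cases hdist : δ ≤ dist t t₀
    · exfalso
      have h1 : γ t ∈ γ '' S := ⟨t, ⟨htI, hdist⟩, rfl⟩
      have h2 : γ t ∈ Metric.ball x₀ r₁ :=
        lt_of_le_of_lt (Metric.mem_closedBall.mp htb) hrr₁
      exact hr₁ h2 h1
    · exact hδ (Metric.mem_ball.mpr (not_le.mp hdist))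
  -- the bump
  set φ : (Fin n → ℝ) → ℝ := fun x => max (r - dist x x₀) 0 with hφ
  have hφcont : Continuous φ :=
    (continuous_const.sub (continuous_id.dist continuous_const)).max continuous_const
  have hφnn : ∀ x, 0 ≤ φ x := fun x => le_max_right _ _
  have hφle : ∀ x, φ x ≤ r := fun x =>
    max_le (by simpa using dist_nonneg) hr0.le
  have hφsupp : ∀ x, φ x ≠ 0 → x ∈ Metric.ball x₀ r := by
    intro x hx'
    have : 0 < r - dist x x₀ := by
      rcases le_or_gt (r - dist x x₀) 0 with hle | hlt
      · exact absurd (max_eq_right hle) hx'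
      · exact hlt
    exact Metric.mem_ball.mpr (by linarith)
  set B₀ : (Fin n → ℝ) → (Fin n → ℝ) := fun x => φ x • v with hB₀
  have hB₀cont : Continuous B₀ := hφcont.smul continuous_const
  have hB₀bd : ∀ x, ‖B₀ x‖ ≤ r * ‖v‖ := by
    intro x
    rw [hB₀, norm_smul, Real.norm_eq_abs, abs_of_nonneg (hφnn x)]
    exact mul_le_mul_of_nonneg_right (hφle x) (norm_nonneg v)
  refine ⟨BoundedContinuousFunction.ofNormedAddCommGroup B₀ hB₀cont _ hB₀bd, ?_, ?_⟩
  · have hcoe : ⇑(BoundedContinuousFunction.ofNormedAddCommGroup B₀ hB₀cont _ hB₀bd) = B₀ := rfl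
    rw [hcoe]
    refine (closure_mono ?_).trans ((Metric.closure_ball_subset_closedBall).trans hballK)
    intro x hx'
    refine hφsupp x fun h0 => hx' ?_
    simp [hB₀, h0]
  · have hcoe : ⇑(BoundedContinuousFunction.ofNormedAddCommGroup B₀ hB₀cont _ hB₀bd) = B₀ := rfl
    rw [hcoe]
    set g : ℝ → ℝ := fun t => φ (γ t) * h t with hg
    have hgeq : ∀ t, (∑ j, B₀ (γ t) j * deriv γ t j) = g t := by
      intro t
      simp only [hB₀, hg, hh, Pi.smul_apply, smul_eq_mul, Finset.mul_sum]
      exact Finset.sum_congr rfl fun j _ => by ring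
    simp only [hgeq]
    have hgcont : Continuous g := (hφcont.comp hγc).mul hcont
    have hgnn : ∀ t ∈ Set.Ioc (0:ℝ) T, 0 ≤ g t := by
      intro t ht
      by_cases h0 : φ (γ t) = 0
      · simp [hg, h0]
      · exact mul_nonneg (hφnn _) (key t (Set.Ioc_subset_Icc_self ht)
          (Metric.ball_subset_closedBall (hφsupp _ h0))).le
    have hgt₀ : 0 < g t₀ := by
      have hφx₀ : φ x₀ = r := by simp [hφ, hr0.le]
      rw [hg]
      simp only []
      rw [← hx₀, hφx₀]
      exact mul_pos hr0 hht₀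
    obtain ⟨δ₂, hδ₂0, hδ₂⟩ := Metric.isOpen_iff.mp (isOpen_Ioi.preimage hgcont) t₀ hgt₀
    set a : ℝ := max 0 (t₀ - δ₂) with ha
    set b : ℝ := min T (t₀ + δ₂) with hb
    have hab : a < b := by
      rw [ha, hb]
      refine max_lt (lt_min hT (by linarith [ht₀.1])) (lt_min (by linarith [ht₀.2]) (by linarith))
    have hIsub : Set.Ioo a b ⊆ Function.support g ∩ Set.Ioc 0 T := by
      rintro t ⟨ht1, ht2⟩
      have h0t : (0:ℝ) < t := lt_of_le_of_lt (le_max_left 0 _) ht1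
      have htT : t ≤ T := le_trans ht2.le (min_le_left T _)
      have hd1 : t₀ - δ₂ < t := lt_of_le_of_lt (le_max_right 0 _) ht1
      have hd2 : t < t₀ + δ₂ := lt_of_lt_of_le ht2 (min_le_right T _)
      have hdist : dist t t₀ < δ₂ := by
        rw [Real.dist_eq, abs_lt]; constructor <;> linarith
      exact ⟨Function.mem_support.mpr
        (Set.mem_Ioi.mp (hδ₂ (Metric.mem_ball.mpr hdist))).ne', h0t, htT⟩
    refine (intervalIntegral.integral_pos_iff_support_of_nonneg_ae' ?_
      (hgcont.intervalIntegrable 0 T)).mpr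
      ⟨hT, lt_of_lt_of_le ?_ (MeasureTheory.measure_mono hIsub)⟩
    · rw [Set.uIoc_of_le hT.le]
      filter_upwards [MeasureTheory.ae_restrict_mem measurableSet_Ioc] with t ht
      exact hgnn t ht
    · rw [Real.volume_Ioo]
      exact ENNReal.ofReal_pos.mpr (by linarith)

/-- genericity in Theorem 1.2: among bounded continuous vector fields
supported in a compact set `K` whose interior meets the injective regular `C¹` curve
`γ`, those with `exp(i ∫₀ᵀ ⟨A(γ(t)), γ'(t)⟩ dt) ≠ 1` form an open dense set. -/
theorem stmt_15 (n : ℕ) (T : ℝ) (hT : 0 < T) (γ : ℝ → (Fin n → ℝ))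
    (hγ : ContDiff ℝ 1 γ) (hinj : Set.InjOn γ (Set.Icc 0 T))
    (hγ' : ∀ t ∈ Set.Icc (0 : ℝ) T, deriv γ t ≠ 0)
    (t₀ : ℝ) (ht₀ : t₀ ∈ Set.Icc (0 : ℝ) T)
    (K : Set (Fin n → ℝ)) (hK : IsCompact K) (hx : γ t₀ ∈ interior K) :
    IsOpen {A : VectorFieldsIn n K |
        Complex.exp (Complex.I *
          ((∫ t in (0 : ℝ)..T, ∑ j, A.1 (γ t) j * deriv γ t j : ℝ) : ℂ)) ≠ 1} ∧
    Dense {A : VectorFieldsIn n K |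
        Complex.exp (Complex.I *
          ((∫ t in (0 : ℝ)..T, ∑ j, A.1 (γ t) j * deriv γ t j : ℝ) : ℂ)) ≠ 1} := by
  have hγc : Continuous γ := hγ.continuous
  have hd : Continuous (deriv γ) := hγ.continuous_deriv le_rfl
  have hLcont : Continuous (fun A : VectorFieldsIn n K =>
      ∫ t in (0:ℝ)..T, ∑ j, A.1 (γ t) j * deriv γ t j) := L_cont γ hγc hd T
  have hFcont : Continuous (fun A : VectorFieldsIn n K =>
      Complex.exp (Complex.I *
        ((∫ t in (0 : ℝ)..T, ∑ j, A.1 (γ t) j * deriv γ t j : ℝ) : ℂ))) :=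
    Complex.continuous_exp.comp (continuous_const.mul
      (Complex.continuous_ofReal.comp hLcont))
  constructor
  · exact IsOpen.preimage hFcont isOpen_compl_singleton
  · rw [Metric.dense_iff]
    intro A ε hε
    by_cases hA : Complex.exp (Complex.I *
        ((∫ t in (0 : ℝ)..T, ∑ j, A.1 (γ t) j * deriv γ t j : ℝ) : ℂ)) ≠ 1
    · exact ⟨A, Metric.mem_ball_self hε, hA⟩
    push_neg at hA
    obtain ⟨B, hBsupp, hBpos⟩ := exists_bump n T hT γ hγ hinj hγ' t₀ ht₀ K hx
    set c : ℝ := ∫ t in (0:ℝ)..T, ∑ j, B (γ t) j * deriv γ t j with hc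
    set s : ℝ := min (ε / (2 * (‖B‖ + 1))) (Real.pi / c) with hs
    have hs0 : 0 < s := lt_min (by positivity) (div_pos Real.pi_pos hBpos)
    have hsupp' : tsupport ⇑(A.1 + s • B) ⊆ K := by
      refine (tsupport_add (f := ⇑A.1) (g := s • ⇑B)).trans ?_
      refine Set.union_subset A.2 ?_
      exact (closure_mono (Function.support_const_smul_subset s ⇑B)).trans hBsupp
    set A' : VectorFieldsIn n K := ⟨A.1 + s • B, hsupp'⟩ with hA'
    have hintA : IntervalIntegrable (fun t => ∑ j, A.1 (γ t) j * deriv γ t j)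
        MeasureTheory.volume 0 T := (integrand_cont γ hγc hd A.1).intervalIntegrable 0 T
    have hintB : IntervalIntegrable (fun t => ∑ j, B (γ t) j * deriv γ t j)
        MeasureTheory.volume 0 T := (integrand_cont γ hγc hd B).intervalIntegrable 0 T
    have hLA' : (∫ t in (0:ℝ)..T, ∑ j, A'.1 (γ t) j * deriv γ t j)
        = (∫ t in (0:ℝ)..T, ∑ j, A.1 (γ t) j * deriv γ t j) + s * c := by
      have heq : (fun t => ∑ j, A'.1 (γ t) j * deriv γ t j)
          = fun t => (∑ j, A.1 (γ t) j * deriv γ t j)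
            + s * ∑ j, B (γ t) j * deriv γ t j := by
        funext t
        rw [Finset.mul_sum, ← Finset.sum_add_distrib]
        refine Finset.sum_congr rfl fun j _ => ?_
        have : A'.1 (γ t) j = A.1 (γ t) j + s * B (γ t) j := by
          simp [hA']
        rw [this]; ring
      rw [heq, intervalIntegral.integral_add hintA (hintB.const_mul s),
        intervalIntegral.integral_const_mul]
    refine ⟨A', ?_, ?_⟩
    · -- dist A' A < ε
      rw [Metric.mem_ball, Subtype.dist_eq]
      have : A'.1 - A.1 = s • B := by simp [hA']
      rw [dist_eq_norm, this]
      have h0 : ‖s • B‖ = ‖s‖ * ‖B‖ := norm_smul s B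
      rw [h0, Real.norm_eq_abs, abs_of_nonneg hs0.le]
      have h1 : s * ‖B‖ ≤ (ε / (2 * (‖B‖ + 1))) * (‖B‖ + 1) :=
        mul_le_mul (min_le_left _ _) (by linarith) (norm_nonneg B) (by positivity)
      have h2 : (ε / (2 * (‖B‖ + 1))) * (‖B‖ + 1) = ε / 2 := by
        field_simp
      linarith
    · -- membership
      show Complex.exp (Complex.I *
          ((∫ t in (0 : ℝ)..T, ∑ j, A'.1 (γ t) j * deriv γ t j : ℝ) : ℂ)) ≠ 1
      rw [hLA']
      push_cast
      rw [mul_add, Complex.exp_add, hA, one_mul]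
      have hθ1 : 0 < s * c := mul_pos hs0 hBpos
      have hθ2 : s * c ≤ Real.pi := by
        have := min_le_right (ε / (2 * (‖B‖ + 1))) (Real.pi / c)
        calc s * c ≤ (Real.pi / c) * c := mul_le_mul_of_nonneg_right this hBpos.le
          _ = Real.pi := div_mul_cancel₀ _ hBpos.ne'
      intro heq
      obtain ⟨k, hk⟩ := Complex.exp_eq_one_iff.mp heq
      have hk' : ((s * c : ℝ) : ℂ) = ((2 * Real.pi * (k : ℝ) : ℝ) : ℂ) := by
        have hI : Complex.I * ((s:ℂ) * (c:ℂ)) = Complex.I * ((2 * Real.pi * (k:ℝ) : ℝ) : ℂ) := by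
          rw [hk]; push_cast; ring
        have := mul_left_cancel₀ Complex.I_ne_zero hI
        push_cast at this ⊢
        exact this
      have hkr : s * c = 2 * Real.pi * (k : ℝ) := by exact_mod_cast hk'
      rcases Int.lt_or_le k 1 with hk1 | hk1
      · have : (k : ℝ) ≤ 0 := by exact_mod_cast Int.lt_add_one_iff.mp hk1
        nlinarith [Real.pi_pos]
      · have : (1 : ℝ) ≤ (k : ℝ) := by exact_mod_cast hk1
        nlinarith [Real.pi_pos]
end
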